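/- Under the setup of the 3-block ADMM iterates with H = XᵀX + λI (λ > 0), nondecreasing penalties ρ_t, and constant C_F ≥ 1 bounding ‖H^{-1/2}‖₂, ‖H‖₂, ‖HW‖_F: for all t ≥ 1, ‖V^{(t+1)}‖_F ≤ (C_F + C_F⁴)(1 + ‖D^{(t)}‖_F + ‖V^{(t)}‖_F/ρ_{t-1} + ‖V^{(t-1)}‖_F/ρ_{t-1}), and ‖D^{(t+1)} − D^{(t)}‖_F ≤ (2C_F + 2C_F⁴)/ρ_t · (1 + ‖D^{(t)}‖_F + ‖V^{(t)}‖_F/ρ_{t-1} + ‖V^{(t-1)}‖_F/ρ_{t-1}). -/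

import Mathlib

open Matrix

noncomputable def frobNorm {n m : ℕ} (A : Matrix (Fin n) (Fin m) ℝ) : ℝ :=
  Real.sqrt (∑ i, ∑ j, (A i j) ^ 2)

/-- The spectral (ℓ₂ operator) norm of a square real matrix. -/
noncomputable def specNorm {n : ℕ} (A : Matrix (Fin n) (Fin n) ℝ) : ℝ :=
  ‖LinearMap.toContinuousLinearMap (Matrix.toEuclideanLin A)‖

/-!
Put `A := S⁽ᵗ⁺¹⁾ + V⁽ᵗ⁾/ρₜ`. The dual update reads `V⁽ᵗ⁺¹⁾ = ρₜ (A - D⁽ᵗ⁺¹⁾)`, and `D⁽ᵗ⁺¹⁾` is a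
best approximation of `A` from `𝒮` while `D⁽ᵗ⁾ ∈ 𝒮`; so both claims reduce to bounding
`ρₜ ‖A - D⁽ᵗ⁾‖_F`. Substituting the `S`-update gives
`A - D⁽ᵗ⁾ = (H + ρₜ I)⁻¹ H (W - L⁽ᵗ⁾ - D⁽ᵗ⁾ + V⁽ᵗ⁾/ρₜ)`, and `‖ρₜ (H + ρₜ I)⁻¹‖₂ ≤ 1` because
`H = R² ⪰ 0`. Finally `H L⁽ᵗ⁾ = R Pᵣ(R (W - S⁽ᵗ⁾))`, where `Pᵣ` does not increase the Frobenius
norm (the rank-`r` matrices form a cone), and the previous dual update gives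
`S⁽ᵗ⁾ = D⁽ᵗ⁾ + (V⁽ᵗ⁾ - V⁽ᵗ⁻¹⁾)/ρₜ₋₁`.
-/

section FrobeniusNorm

variable {n m : ℕ}

def frobVec : Matrix (Fin n) (Fin m) ℝ →ₗ[ℝ] EuclideanSpace ℝ (Fin n × Fin m) where
  toFun A := WithLp.toLp 2 fun p => A p.1 p.2
  map_add' _ _ := rfl
  map_smul' _ _ := rfl

lemma frobNorm_eq_norm_frobVec (A : Matrix (Fin n) (Fin m) ℝ) : frobNorm A = ‖frobVec A‖ := by
  rw [frobNorm, EuclideanSpace.norm_eq, Fintype.sum_prod_type]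
  simp only [Real.norm_eq_abs, sq_abs]
  rfl

lemma frobNorm_nonneg (A : Matrix (Fin n) (Fin m) ℝ) : 0 ≤ frobNorm A :=
  Real.sqrt_nonneg _

lemma frobNorm_add_le (A B : Matrix (Fin n) (Fin m) ℝ) :
    frobNorm (A + B) ≤ frobNorm A + frobNorm B := by
  simp only [frobNorm_eq_norm_frobVec, map_add]
  exact norm_add_le _ _

lemma frobNorm_sub_le (A B : Matrix (Fin n) (Fin m) ℝ) :
    frobNorm (A - B) ≤ frobNorm A + frobNorm B := by
  simp only [frobNorm_eq_norm_frobVec, map_sub]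
  exact norm_sub_le _ _

lemma frobNorm_smul (c : ℝ) (A : Matrix (Fin n) (Fin m) ℝ) :
    frobNorm (c • A) = |c| * frobNorm A := by
  simp only [frobNorm_eq_norm_frobVec, map_smul]
  rw [norm_smul, Real.norm_eq_abs]

lemma frobNorm_sq_eq_sum_norm_col_sq (A : Matrix (Fin n) (Fin m) ℝ) :
    frobNorm A ^ 2 = ∑ j, ‖WithLp.toLp 2 fun i => A i j‖ ^ 2 := by
  rw [frobNorm, Real.sq_sqrt (by positivity), Finset.sum_comm]
  simp [EuclideanSpace.real_norm_sq_eq]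

lemma frobNorm_mul_le_specNorm_mul (M : Matrix (Fin n) (Fin n) ℝ) (B : Matrix (Fin n) (Fin m) ℝ) :
    frobNorm (M * B) ≤ specNorm M * frobNorm B := by
  have hcol (j : Fin m) : ‖WithLp.toLp 2 fun i => (M * B) i j‖ ≤
      specNorm M * ‖WithLp.toLp 2 fun i => B i j‖ :=
    (LinearMap.toContinuousLinearMap (toEuclideanLin M)).le_opNorm (WithLp.toLp 2 fun i => B i j)
  refine le_of_sq_le_sq ?_ (mul_nonneg (norm_nonneg _) (frobNorm_nonneg B))
  rw [mul_pow, frobNorm_sq_eq_sum_norm_col_sq, frobNorm_sq_eq_sum_norm_col_sq, Finset.mul_sum]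
  gcongr with j
  rw [← mul_pow]
  exact pow_le_pow_left₀ (norm_nonneg _) (hcol j) 2

lemma frobNorm_mul_le_of_specNorm_le {M : Matrix (Fin n) (Fin n) ℝ} {c : ℝ} (h : specNorm M ≤ c)
    (B : Matrix (Fin n) (Fin m) ℝ) : frobNorm (M * B) ≤ c * frobNorm B :=
  (frobNorm_mul_le_specNorm_mul M B).trans (mul_le_mul_of_nonneg_right h (frobNorm_nonneg B))

end FrobeniusNorm

lemma Matrix.PosSemidef.mul_norm_le_norm_add_smul_one {ι : Type*} [Fintype ι] [DecidableEq ι]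
    {H : Matrix ι ι ℝ} (hH : H.PosSemidef) (ρ : ℝ) (x : EuclideanSpace ℝ ι) :
    ρ * ‖x‖ ≤ ‖toEuclideanLin (H + ρ • 1) x‖ := by
  have hquad : ρ * ‖x‖ ^ 2 ≤ inner ℝ x (toEuclideanLin (H + ρ • 1) x) := by
    have hHx : 0 ≤ x.ofLp ⬝ᵥ (H *ᵥ x.ofLp) := by simpa using hH.dotProduct_mulVec_nonneg x.ofLp
    have hx : ‖x‖ ^ 2 = x.ofLp ⬝ᵥ x.ofLp := by
      rw [← real_inner_self_eq_norm_sq, EuclideanSpace.inner_eq_star_dotProduct, star_trivial]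
    rw [hx, EuclideanSpace.inner_eq_star_dotProduct, star_trivial]
    simp only [toLpLin_apply, add_mulVec, smul_mulVec, one_mulVec, add_dotProduct, smul_dotProduct,
      smul_eq_mul, dotProduct_comm (H *ᵥ x.ofLp)]
    linarith
  rcases (norm_nonneg x).eq_or_lt with hx | hx
  · simp [← hx]
  · refine le_of_mul_le_mul_right ?_ hx
    nlinarith [real_inner_le_norm x (toEuclideanLin (H + ρ • 1) x)]

lemma Matrix.PosSemidef.specNorm_inv_add_smul_one_le {n : ℕ} {H : Matrix (Fin n) (Fin n) ℝ}
    (hH : H.PosSemidef) {ρ : ℝ} (hρ : 0 < ρ) : specNorm (H + ρ • 1)⁻¹ ≤ ρ⁻¹ := by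
  have hP : IsUnit (H + ρ • 1) := (PosDef.posSemidef_add hH (PosDef.one.smul hρ)).isUnit
  refine ContinuousLinearMap.opNorm_le_bound _ (inv_nonneg.2 hρ.le) fun y => ?_
  have hy : toEuclideanLin (H + ρ • 1) (toEuclideanLin (H + ρ • 1)⁻¹ y) = y := by
    simp only [toLpLin_apply, mulVec_mulVec, mul_nonsing_inv _ ((isUnit_iff_isUnit_det _).1 hP),
      one_mulVec]
  rw [LinearMap.coe_toContinuousLinearMap', inv_mul_eq_div, le_div_iff₀' hρ]
  have := hH.mul_norm_le_norm_add_smul_one ρ (toEuclideanLin (H + ρ • 1)⁻¹ y)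
  rwa [hy] at this

lemma norm_le_of_forall_norm_sub_le_norm_sub_smul {E : Type*} [NormedAddCommGroup E]
    [InnerProductSpace ℝ E] {x p : E} (h : ∀ c : ℝ, ‖x - p‖ ≤ ‖x - c • p‖) : ‖p‖ ≤ ‖x‖ := by
  rcases eq_or_ne p 0 with rfl | hp
  · simp
  -- the optimal `c` on the line through `p` forces `⟪x, p⟫ = ‖p‖²`, i.e. `x - p ⊥ p`
  have hsq := pow_le_pow_left₀ (norm_nonneg _) (h (inner ℝ x p / ‖p‖ ^ 2)) 2
  rw [norm_sub_sq_real, norm_sub_sq_real, inner_smul_right, norm_smul, mul_pow,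
    Real.norm_eq_abs, sq_abs] at hsq
  have hb : 0 < ‖p‖ ^ 2 := by positivity
  have hab : inner ℝ x p = ‖p‖ ^ 2 := by
    field_simp at hsq
    nlinarith [sq_nonneg (inner ℝ x p - ‖p‖ ^ 2)]
  have := norm_sub_sq_real x p
  nlinarith [sq_nonneg ‖x - p‖, norm_nonneg p, norm_nonneg x]

lemma Matrix.rank_smul_le {ι κ 𝕜 : Type*} [Fintype ι] [Fintype κ] [DecidableEq ι] [CommRing 𝕜]
    [StrongRankCondition 𝕜] (c : 𝕜) (M : Matrix ι κ 𝕜) : (c • M).rank ≤ M.rank := by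
  simpa only [smul_mul, Matrix.one_mul] using rank_mul_le_right (c • (1 : Matrix ι ι 𝕜)) M

section BestApproximation

variable {n m : ℕ} {K : Set (Matrix (Fin n) (Fin m) ℝ)} {A p : Matrix (Fin n) (Fin m) ℝ}

lemma frobNorm_le_of_isBestApprox_of_smul_mem (hK : ∀ c : ℝ, ∀ M ∈ K, c • M ∈ K) (hp : p ∈ K)
    (hbest : ∀ M ∈ K, frobNorm (A - p) ≤ frobNorm (A - M)) : frobNorm p ≤ frobNorm A := by
  simp only [frobNorm_eq_norm_frobVec] at hbest ⊢
  refine norm_le_of_forall_norm_sub_le_norm_sub_smul fun c => ?_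
  simpa only [map_sub, map_smul] using hbest _ (hK c p hp)

lemma frobNorm_sub_le_two_mul_of_isBestApprox {D : Matrix (Fin n) (Fin m) ℝ} (hD : D ∈ K)
    (hbest : ∀ M ∈ K, frobNorm (A - p) ≤ frobNorm (A - M)) :
    frobNorm (p - D) ≤ 2 * frobNorm (A - D) := by
  calc frobNorm (p - D) = frobNorm ((A - D) - (A - p)) := by rw [sub_sub_sub_cancel_left]
    _ ≤ frobNorm (A - D) + frobNorm (A - p) := frobNorm_sub_le _ _
    _ ≤ 2 * frobNorm (A - D) := by linarith [hbest D hD]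

end BestApproximation

lemma add_smul_sub_eq_smul_add_inv_smul_sub {E : Type*} [AddCommGroup E] [Module ℝ E] {ρ : ℝ}
    (hρ : ρ ≠ 0) (V S D : E) : V + ρ • (S - D) = ρ • (S + ρ⁻¹ • V - D) := by
  rw [add_sub_right_comm, smul_add, smul_smul, mul_inv_cancel₀ hρ, one_smul, add_comm]

lemma eq_add_inv_smul_sub_of_eq_add_smul {E : Type*} [AddCommGroup E] [Module ℝ E] {ρ : ℝ}
    (hρ : ρ ≠ 0) {V V' S D : E} (h : V' = V + ρ • (S - D)) : S = D + ρ⁻¹ • (V' - V) := by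
  rw [h, add_sub_cancel_left, smul_smul, inv_mul_cancel₀ hρ, one_smul, add_sub_cancel]

namespace ADMM

lemma inv_mul_add_inv_smul_sub_eq {ι κ 𝕜 : Type*} [Fintype ι] [DecidableEq ι] [Field 𝕜]
    {H : Matrix ι ι 𝕜} {ρ : 𝕜} (hP : IsUnit (H + ρ • 1)) (hρ : ρ ≠ 0) (Y V D : Matrix ι κ 𝕜) :
    (H + ρ • 1)⁻¹ * (H * Y - V + ρ • D) + ρ⁻¹ • V - D =
      (H + ρ • 1)⁻¹ * (H * (Y - D + ρ⁻¹ • V)) := by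
  have hPinv : (H + ρ • 1)⁻¹ * (H + ρ • 1) = 1 :=
    nonsing_inv_mul _ ((isUnit_iff_isUnit_det _).1 hP)
  have hcancel : ρ⁻¹ • V - D = (H + ρ • 1)⁻¹ * ((H + ρ • 1) * (ρ⁻¹ • V - D)) := by
    rw [← Matrix.mul_assoc, hPinv, Matrix.one_mul]
  rw [add_sub_assoc, hcancel, ← Matrix.mul_add]
  congr 1
  simp only [Matrix.add_mul, Matrix.mul_sub, Matrix.mul_add, smul_mul, Matrix.one_mul,
    smul_smul, mul_inv_cancel₀ hρ, one_smul]
  abel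

lemma frobNorm_le_of_dual_update {n m : ℕ} {ρ : ℝ} (hρ : 0 < ρ)
    {V V' S D : Matrix (Fin n) (Fin m) ℝ} (h : V' = V + ρ • (S - D)) :
    frobNorm S ≤ frobNorm D + (frobNorm V' + frobNorm V) / ρ := by
  rw [eq_add_inv_smul_sub_of_eq_add_smul hρ.ne' h]
  refine (frobNorm_add_le _ _).trans (add_le_add le_rfl ?_)
  rw [frobNorm_smul, abs_of_pos (inv_pos.2 hρ), inv_mul_eq_div]
  exact div_le_div_of_nonneg_right (frobNorm_sub_le _ _) hρ.le

variable {n m : ℕ} {H R : Matrix (Fin n) (Fin n) ℝ} {W : Matrix (Fin n) (Fin m) ℝ}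
  {Pr : Matrix (Fin n) (Fin m) ℝ → Matrix (Fin n) (Fin m) ℝ} {CF : ℝ}

lemma frobNorm_mul_lowRankUpdate_le (hR : IsUnit R) (hRR : R * R = H)
    (hPr : ∀ A, frobNorm (Pr A) ≤ frobNorm A) (hCF : 0 ≤ CF) (hCF1 : specNorm R⁻¹ ≤ CF)
    (hCF2 : specNorm H ≤ CF) (hCF3 : frobNorm (H * W) ≤ CF) (Y : Matrix (Fin n) (Fin m) ℝ) :
    frobNorm (H * (R⁻¹ * Pr (R * (W - Y)))) ≤ CF ^ 4 * (1 + frobNorm Y) := by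
  have hdet : IsUnit R.det := (isUnit_iff_isUnit_det R).1 hR
  have hR_eq (M : Matrix (Fin n) (Fin m) ℝ) : R * M = R⁻¹ * (H * M) := by
    rw [← hRR, ← Matrix.mul_assoc, ← Matrix.mul_assoc, nonsing_inv_mul _ hdet, Matrix.one_mul]
  have hH_inv (M : Matrix (Fin n) (Fin m) ℝ) : H * (R⁻¹ * M) = R * M := by
    rw [← hRR, Matrix.mul_assoc, ← Matrix.mul_assoc R R⁻¹, mul_nonsing_inv _ hdet, Matrix.one_mul]
  have hHM (M : Matrix (Fin n) (Fin m) ℝ) := frobNorm_mul_le_of_specNorm_le hCF2 M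
  have hRinvM (M : Matrix (Fin n) (Fin m) ℝ) := frobNorm_mul_le_of_specNorm_le hCF1 M
  have hG : frobNorm (R * (W - Y)) ≤ CF * (CF + CF * frobNorm Y) := by
    rw [hR_eq, Matrix.mul_sub]
    refine (hRinvM _).trans (mul_le_mul_of_nonneg_left ?_ hCF)
    exact (frobNorm_sub_le _ _).trans (add_le_add hCF3 (hHM Y))
  calc frobNorm (H * (R⁻¹ * Pr (R * (W - Y))))
      = frobNorm (R⁻¹ * (H * Pr (R * (W - Y)))) := by rw [hH_inv, hR_eq]
    _ ≤ CF * (CF * frobNorm (R * (W - Y))) := by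
      refine (hRinvM _).trans (mul_le_mul_of_nonneg_left ((hHM _).trans ?_) hCF)
      exact mul_le_mul_of_nonneg_left (hPr _) hCF
    _ ≤ CF * (CF * (CF * (CF + CF * frobNorm Y))) := by gcongr
    _ = CF ^ 4 * (1 + frobNorm Y) := by ring

variable {ρ : ℕ → ℝ} {S L D V : ℕ → Matrix (Fin n) (Fin m) ℝ}

lemma mul_frobNorm_residual_le (hH : H.PosSemidef) (hR : IsUnit R) (hRR : R * R = H)
    (hPr : ∀ A, frobNorm (Pr A) ≤ frobNorm A) {s t : ℕ} (hρs : 0 < ρ s) (hρst : ρ s ≤ ρ t)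
    (hS : S (t + 1) = (H + ρ t • 1)⁻¹ * (H * (W - L t) - V t + ρ t • D t))
    (hL : L t = R⁻¹ * Pr (R * (W - S t))) (hV : V t = V s + ρ s • (S t - D t))
    (hCF : 1 ≤ CF) (hCF1 : specNorm R⁻¹ ≤ CF) (hCF2 : specNorm H ≤ CF)
    (hCF3 : frobNorm (H * W) ≤ CF) :
    ρ t * frobNorm (S (t + 1) + (ρ t)⁻¹ • V t - D t) ≤
      (CF + CF ^ 4) * (1 + frobNorm (D t) + frobNorm (V t) / ρ s + frobNorm (V s) / ρ s) := by
  have hρt : 0 < ρ t := hρs.trans_le hρst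
  have hCF0 : 0 ≤ CF := zero_le_one.trans hCF
  have hP : IsUnit (H + ρ t • 1) := (PosDef.posSemidef_add hH (PosDef.one.smul hρt)).isUnit
  set Z := H * (W - L t - D t + (ρ t)⁻¹ • V t)
  have hres : S (t + 1) + (ρ t)⁻¹ • V t - D t = (H + ρ t • 1)⁻¹ * Z := by
    rw [hS, inv_mul_add_inv_smul_sub_eq hP hρt.ne']
  have hSt := frobNorm_le_of_dual_update hρs hV
  have hDV : frobNorm (D t - (ρ t)⁻¹ • V t) ≤ frobNorm (D t) + frobNorm (V t) / ρ s := by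
    refine (frobNorm_sub_le _ _).trans (add_le_add le_rfl ?_)
    rw [frobNorm_smul, abs_of_pos (inv_pos.2 hρt), inv_mul_eq_div]
    exact div_le_div_of_nonneg_left (frobNorm_nonneg _) hρs hρst
  have hZ : frobNorm Z ≤
      CF * (1 + frobNorm (D t) + frobNorm (V t) / ρ s) + CF ^ 4 * (1 + frobNorm (S t)) := by
    have hsplit : Z = H * W - H * (D t - (ρ t)⁻¹ • V t) - H * L t := by
      simp only [Z, Matrix.mul_sub, Matrix.mul_add]
      abel
    rw [hsplit]
    refine (frobNorm_sub_le _ _).trans (add_le_add ?_ ?_)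
    · refine (frobNorm_sub_le _ _).trans ?_
      have := (frobNorm_mul_le_of_specNorm_le hCF2 _).trans (mul_le_mul_of_nonneg_left hDV hCF0)
      linarith
    · rw [hL]
      exact frobNorm_mul_lowRankUpdate_le hR hRR hPr hCF0 hCF1 hCF2 hCF3 (S t)
  have hVs : 0 ≤ frobNorm (V s) / ρ s := div_nonneg (frobNorm_nonneg _) hρs.le
  calc ρ t * frobNorm (S (t + 1) + (ρ t)⁻¹ • V t - D t)
      ≤ ρ t * ((ρ t)⁻¹ * frobNorm Z) := by
        rw [hres]
        gcongr
        exact frobNorm_mul_le_of_specNorm_le (hH.specNorm_inv_add_smul_one_le hρt) Z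
    _ = frobNorm Z := by field_simp
    _ ≤ CF * (1 + frobNorm (D t) + frobNorm (V t) / ρ s + frobNorm (V s) / ρ s) +
        CF ^ 4 * (1 + frobNorm (D t) + frobNorm (V t) / ρ s + frobNorm (V s) / ρ s) := by
      refine hZ.trans (add_le_add (mul_le_mul_of_nonneg_left ?_ hCF0)
        (mul_le_mul_of_nonneg_left ?_ (by positivity)))
      · linarith
      · linarith [add_div (frobNorm (V t)) (frobNorm (V s)) (ρ s)]
    _ = _ := by ring

end ADMM

theorem stmt12_general (n m r : ℕ)
    (W : Matrix (Fin n) (Fin m) ℝ)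
    (H R : Matrix (Fin n) (Fin n) ℝ)
    (hR : R.PosDef) (hRR : R * R = H)
    (ρ : ℕ → ℝ) (hρpos : ∀ t, 0 < ρ t) (hρmono : Monotone ρ)
    -- `Pr` is the Frobenius-optimal rank-`r` projection
    (Pr : Matrix (Fin n) (Fin m) ℝ → Matrix (Fin n) (Fin m) ℝ)
    (hPr : ∀ A : Matrix (Fin n) (Fin m) ℝ, (Pr A).rank ≤ r ∧
      ∀ M : Matrix (Fin n) (Fin m) ℝ, M.rank ≤ r →
        frobNorm (A - Pr A) ≤ frobNorm (A - M))
    -- `PS` is the (magnitude-based) Frobenius projection onto the sparsity set `𝒮`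
    (𝒮 : Set (Matrix (Fin n) (Fin m) ℝ))
    (PS : Matrix (Fin n) (Fin m) ℝ → Matrix (Fin n) (Fin m) ℝ)
    (hPS : ∀ A : Matrix (Fin n) (Fin m) ℝ, PS A ∈ 𝒮 ∧
      ∀ D ∈ 𝒮, frobNorm (A - PS A) ≤ frobNorm (A - D))
    -- the 3-block ADMM iterates
    (S L D V : ℕ → Matrix (Fin n) (Fin m) ℝ)
    (hS : ∀ t, S (t + 1) =
      (H + ρ t • (1 : Matrix (Fin n) (Fin n) ℝ))⁻¹ * (H * (W - L t) - V t + ρ t • D t))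
    (hL : ∀ t, L (t + 1) = R⁻¹ * Pr (R * (W - S (t + 1))))
    (hD : ∀ t, D (t + 1) = PS (S (t + 1) + (ρ t)⁻¹ • V t))
    (hV : ∀ t, V (t + 1) = V t + ρ t • (S (t + 1) - D (t + 1)))
    (CF : ℝ) (hCF : 1 ≤ CF)
    (hCF1 : specNorm R⁻¹ ≤ CF) (hCF2 : specNorm H ≤ CF) (hCF3 : frobNorm (H * W) ≤ CF) :
    ∀ t ≥ 1,
      frobNorm (V (t + 1)) ≤
        (CF + CF ^ 4) * (1 + frobNorm (D t) + frobNorm (V t) / ρ (t - 1) +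
          frobNorm (V (t - 1)) / ρ (t - 1)) ∧
      frobNorm (D (t + 1) - D t) ≤
        (2 * CF + 2 * CF ^ 4) / ρ t * (1 + frobNorm (D t) + frobNorm (V t) / ρ (t - 1) +
          frobNorm (V (t - 1)) / ρ (t - 1)) := by
  intro t ht
  obtain ⟨s, rfl⟩ := Nat.exists_eq_add_of_le' ht
  rw [Nat.add_sub_cancel]
  have hH : H.PosSemidef := by
    simpa only [hR.isHermitian.eq, hRR] using posSemidef_conjTranspose_mul_self R
  have hPr_le (A : Matrix (Fin n) (Fin m) ℝ) : frobNorm (Pr A) ≤ frobNorm A :=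
    frobNorm_le_of_isBestApprox_of_smul_mem (fun c M hM => (rank_smul_le c M).trans hM)
      (hPr A).1 (hPr A).2
  have hres := ADMM.mul_frobNorm_residual_le hH hR.isUnit hRR hPr_le (hρpos s) (hρmono s.le_succ)
    (hS (s + 1)) (hL s) (hV s) hCF hCF1 hCF2 hCF3
  have hDmem : D (s + 1) ∈ 𝒮 := hD s ▸ (hPS _).1
  have hbest := (hPS (S (s + 1 + 1) + (ρ (s + 1))⁻¹ • V (s + 1))).2
  rw [← hD (s + 1)] at hbest
  refine ⟨?_, ?_⟩
  · rw [hV (s + 1), add_smul_sub_eq_smul_add_inv_smul_sub (hρpos _).ne', frobNorm_smul,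
      abs_of_pos (hρpos _)]
    exact (mul_le_mul_of_nonneg_left (hbest _ hDmem) (hρpos _).le).trans hres
  · rw [div_mul_eq_mul_div, le_div_iff₀ (hρpos _)]
    nlinarith [frobNorm_sub_le_two_mul_of_isBestApprox hDmem hbest, hρpos (s + 1)]

theorem stmt12 (N n m r : ℕ) (X : Matrix (Fin N) (Fin n) ℝ)
    (W : Matrix (Fin n) (Fin m) ℝ) (l : ℝ) (hl : 0 < l)
    (H R : Matrix (Fin n) (Fin n) ℝ)
    (hHdef : H = Xᵀ * X + l • (1 : Matrix (Fin n) (Fin n) ℝ))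
    (hR : R.PosDef) (hRR : R * R = H)
    (ρ : ℕ → ℝ) (hρpos : ∀ t, 0 < ρ t) (hρmono : Monotone ρ)
    -- `Pr` is the Frobenius-optimal rank-`r` projection
    (Pr : Matrix (Fin n) (Fin m) ℝ → Matrix (Fin n) (Fin m) ℝ)
    (hPr : ∀ A : Matrix (Fin n) (Fin m) ℝ, (Pr A).rank ≤ r ∧
      ∀ M : Matrix (Fin n) (Fin m) ℝ, M.rank ≤ r →
        frobNorm (A - Pr A) ≤ frobNorm (A - M))
    -- `PS` is the (magnitude-based) Frobenius projection onto the sparsity set `𝒮`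
    (𝒮 : Set (Matrix (Fin n) (Fin m) ℝ))
    (PS : Matrix (Fin n) (Fin m) ℝ → Matrix (Fin n) (Fin m) ℝ)
    (hPS : ∀ A : Matrix (Fin n) (Fin m) ℝ, PS A ∈ 𝒮 ∧
      ∀ D ∈ 𝒮, frobNorm (A - PS A) ≤ frobNorm (A - D))
    -- the 3-block ADMM iterates
    (S L D V : ℕ → Matrix (Fin n) (Fin m) ℝ)
    (hS : ∀ t, S (t + 1) =
      (H + ρ t • (1 : Matrix (Fin n) (Fin n) ℝ))⁻¹ * (H * (W - L t) - V t + ρ t • D t))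
    (hL : ∀ t, L (t + 1) = R⁻¹ * Pr (R * (W - S (t + 1))))
    (hD : ∀ t, D (t + 1) = PS (S (t + 1) + (ρ t)⁻¹ • V t))
    (hV : ∀ t, V (t + 1) = V t + ρ t • (S (t + 1) - D (t + 1)))
    (CF : ℝ) (hCF : 1 ≤ CF)
    (hCF1 : specNorm R⁻¹ ≤ CF) (hCF2 : specNorm H ≤ CF) (hCF3 : frobNorm (H * W) ≤ CF) :
    ∀ t ≥ 1,
      frobNorm (V (t + 1)) ≤
        (CF + CF ^ 4) * (1 + frobNorm (D t) + frobNorm (V t) / ρ (t - 1) +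
          frobNorm (V (t - 1)) / ρ (t - 1)) ∧
      frobNorm (D (t + 1) - D t) ≤
        (2 * CF + 2 * CF ^ 4) / ρ t * (1 + frobNorm (D t) + frobNorm (V t) / ρ (t - 1) +
          frobNorm (V (t - 1)) / ρ (t - 1)) :=
  stmt12_general n m r W H R hR hRR ρ hρpos hρmono Pr hPr 𝒮 PS hPS S L D V hS hL hD hV CF hCF hCF1
    hCF2 hCF3
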